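/- arXiv:0809.2947 — 2 statements merged into one kernel-verified Lean document; each statement's English description precedes it below -/
import Mathlib

section
/- An integral domain D is a (∗,v)-CICD if and only if D is a (∗,v)-multiplication domain. -/
/-!
If `(B^v B⁻¹)^∗ = D`, then `A^∗ = (B^v (B⁻¹ A^∗))^∗` for every `A`, because `∗`-products may
be computed after applying `∗` to any factor. Conversely, pick `0 ≠ d ∈ A ⊆ A^v` and write
`dD = (A^v C)^∗`. Then `A^v C ⊆ dD` gives `C ⊆ d (A^v)⁻¹ = d A⁻¹`, whence
`dD ⊆ (A^v · d A⁻¹)^∗ = d (A^v A⁻¹)^∗ ⊆ dD`, and cancelling the principal ideal `dD`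
yields `(A^v A⁻¹)^∗ = D`.
-/

open FractionalIdeal

/-- A star operation on an integral domain `D` with fraction field `K`, acting on
fractional ideals: it fixes `D`, is extensive, monotone, idempotent (all on nonzero
ideals), and commutes with multiplication by nonzero principal fractional ideals. -/
structure StarOp (D : Type*) [CommRing D] [IsDomain D] (K : Type*) [Field K]
    [Algebra D K] [IsFractionRing D K] where
  star : FractionalIdeal (nonZeroDivisors D) K → FractionalIdeal (nonZeroDivisors D) K
  star_one : star 1 = 1
  le_star : ∀ {A}, A ≠ 0 → A ≤ star A
  star_mono : ∀ {A B}, A ≠ 0 → A ≤ B → star A ≤ star B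
  star_idem : ∀ {A}, A ≠ 0 → star (star A) = star A
  star_smul : ∀ {A : FractionalIdeal (nonZeroDivisors D) K} (x : K), x ≠ 0 → A ≠ 0 →
    star (spanSingleton (nonZeroDivisors D) x * A) = spanSingleton (nonZeroDivisors D) x * star A

variable {D K : Type*} [CommRing D] [IsDomain D] [Field K] [Algebra D K] [IsFractionRing D K]

namespace FractionalIdeal

theorem exists_mem_ne_zero {R P : Type*} [CommRing R] {S : Submonoid R} [CommRing P]
    [Algebra R P] {I : FractionalIdeal S P} (hI : I ≠ 0) : ∃ x ∈ I, x ≠ 0 := by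
  by_contra! h
  exact hI (eq_zero_iff.mpr h)

variable {I J C : FractionalIdeal (nonZeroDivisors D) K}

instance : NoZeroDivisors (FractionalIdeal (nonZeroDivisors D) K) :=
  coeToSubmodule_injective.noZeroDivisors _ coe_zero coe_mul

protected theorem inv_ne_zero (hI : I ≠ 0) : I⁻¹ ≠ 0 :=
  right_ne_zero_of_mul (bot_lt_mul_inv hI).ne'

theorem le_inv_inv (hI : I ≠ 0) : I ≤ I⁻¹⁻¹ := by
  rw [inv_eq (I := I⁻¹), le_div_iff_mul_le (FractionalIdeal.inv_ne_zero hI), inv_eq]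
  exact mul_one_div_le_one

theorem inv_inv_inv (hI : I ≠ 0) : I⁻¹⁻¹⁻¹ = I⁻¹ :=
  le_antisymm (inv_anti_mono hI (FractionalIdeal.inv_ne_zero (FractionalIdeal.inv_ne_zero hI))
    (le_inv_inv hI)) (le_inv_inv (FractionalIdeal.inv_ne_zero hI))

theorem inv_inv_mul_inv_le_one (I : FractionalIdeal (nonZeroDivisors D) K) :
    I⁻¹⁻¹ * I⁻¹ ≤ 1 :=
  mul_comm I⁻¹⁻¹ I⁻¹ ▸ mul_one_div_le_one

theorem le_spanSingleton_mul_inv_of_mul_le {d : K} (hd : d ≠ 0) (hI : I ≠ 0)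
    (h : I * C ≤ spanSingleton _ d) : C ≤ spanSingleton _ d * I⁻¹ := by
  have hC : (spanSingleton _ d)⁻¹ * C ≤ I⁻¹ := by
    rw [inv_eq (I := I), le_div_iff_mul_le hI]
    calc (spanSingleton _ d)⁻¹ * C * I = (spanSingleton _ d)⁻¹ * (I * C) := by ring
      _ ≤ (spanSingleton _ d)⁻¹ * spanSingleton _ d := by gcongr
      _ = 1 := spanSingleton_inv_mul K hd
  calc C = spanSingleton _ d * ((spanSingleton _ d)⁻¹ * C) := by
        rw [← mul_assoc, spanSingleton_mul_inv K hd, one_mul]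
    _ ≤ spanSingleton _ d * I⁻¹ := by gcongr

theorem le_of_spanSingleton_mul_le_spanSingleton_mul {d : K} (hd : d ≠ 0)
    (h : spanSingleton _ d * I ≤ spanSingleton _ d * J) : I ≤ J := by
  simpa only [← mul_assoc, spanSingleton_inv_mul K hd, one_mul] using
    mul_le_mul_right h (spanSingleton (nonZeroDivisors D) d)⁻¹

end FractionalIdeal

namespace StarOp

variable (s : StarOp D K) {A B I J C : FractionalIdeal (nonZeroDivisors D) K}

theorem star_ne_zero (hA : A ≠ 0) : s.star A ≠ 0 :=
  fun h => hA (le_antisymm (h ▸ s.le_star hA) (zero_le A))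

theorem star_le_one (hA : A ≠ 0) (h : A ≤ 1) : s.star A ≤ 1 :=
  s.star_one ▸ s.star_mono hA h

theorem star_spanSingleton {x : K} (hx : x ≠ 0) :
    s.star (spanSingleton _ x) = spanSingleton _ x := by
  simpa only [mul_one, s.star_one] using s.star_smul (A := 1) x hx one_ne_zero

theorem mul_star_le (hB : B ≠ 0) : A * s.star B ≤ s.star (A * B) := by
  refine mul_le.mpr fun i hi j hj => ?_
  obtain rfl | hi0 := eq_or_ne i 0
  · rw [zero_mul]
    exact zero_mem _
  have hiB : spanSingleton _ i * s.star B ≤ s.star (A * B) := by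
    rw [← s.star_smul i hi0 hB]
    exact s.star_mono (mul_ne_zero (spanSingleton_ne_zero_iff.mpr hi0) hB)
      (mul_le_mul_left (spanSingleton_le_iff_mem.mpr hi) B)
  exact hiB (mul_mem_mul (mem_spanSingleton_self _ i) hj)

theorem star_mul_star (hA : A ≠ 0) (hB : B ≠ 0) : s.star (A * s.star B) = s.star (A * B) := by
  refine le_antisymm ?_ (s.star_mono (mul_ne_zero hA hB) (mul_le_mul_right (s.le_star hB) A))
  rw [← s.star_idem (mul_ne_zero hA hB)]
  exact s.star_mono (mul_ne_zero hA (s.star_ne_zero hB)) (s.mul_star_le hB)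

theorem star_eq_star_mul_mul_star (hI : I ≠ 0) (hJ : J ≠ 0) (hA : A ≠ 0)
    (h : s.star (I * J) = 1) : s.star A = s.star (I * (J * s.star A)) := by
  have hIJ : I * J ≠ 0 := mul_ne_zero hI hJ
  calc s.star A = s.star (A * s.star (I * J)) := by rw [h, mul_one]
    _ = s.star (I * J * s.star A) := by
      rw [s.star_mul_star hA hIJ, mul_comm, ← s.star_mul_star hIJ hA]
    _ = s.star (I * (J * s.star A)) := by rw [mul_assoc]

theorem one_le_star_mul_inv_of_spanSingleton_eq {d : K} (hd : d ≠ 0) (hI : I ≠ 0) (hC : C ≠ 0)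
    (h : spanSingleton _ d = s.star (I * C)) : 1 ≤ s.star (I * I⁻¹) := by
  have hIC : I * C ≤ spanSingleton _ d := h ▸ s.le_star (mul_ne_zero hI hC)
  refine le_of_spanSingleton_mul_le_spanSingleton_mul hd ?_
  calc spanSingleton _ d * 1 = s.star (I * C) := by rw [mul_one, h]
    _ ≤ s.star (I * (spanSingleton _ d * I⁻¹)) :=
      s.star_mono (mul_ne_zero hI hC)
        (mul_le_mul_right (le_spanSingleton_mul_inv_of_mul_le hd hI hIC) I)
    _ = spanSingleton _ d * s.star (I * I⁻¹) := by
      rw [mul_left_comm, s.star_smul d hd (mul_ne_zero hI (FractionalIdeal.inv_ne_zero hI))]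

end StarOp

/-- `D` is a `(∗,v)`-CICD iff `D` is a `(∗,v)`-multiplication domain. -/
theorem starVCICD_iff_starVMultiplication (s : StarOp D K) :
    (∀ A : FractionalIdeal (nonZeroDivisors D) K, A ≠ 0 → s.star ((A⁻¹)⁻¹ * A⁻¹) = 1) ↔
    (∀ A B : FractionalIdeal (nonZeroDivisors D) K, A ≠ 0 → B ≠ 0 → s.star A ≤ (B⁻¹)⁻¹ →
      ∃ C : FractionalIdeal (nonZeroDivisors D) K, C ≠ 0 ∧ s.star A = s.star ((B⁻¹)⁻¹ * C)) := by
  constructor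
  · intro hcicd A B hA hB _
    have hBi := FractionalIdeal.inv_ne_zero hB
    exact ⟨B⁻¹ * s.star A, mul_ne_zero hBi (s.star_ne_zero hA),
      s.star_eq_star_mul_mul_star (FractionalIdeal.inv_ne_zero hBi) hBi hA (hcicd B hB)⟩
  · intro hmult A hA
    have hAi := FractionalIdeal.inv_ne_zero hA
    have hAv := FractionalIdeal.inv_ne_zero hAi
    obtain ⟨d, hdA, hd⟩ := exists_mem_ne_zero hA
    have hd_le : s.star (spanSingleton _ d) ≤ A⁻¹⁻¹ := by
      rw [s.star_spanSingleton hd]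
      exact spanSingleton_le_iff_mem.mpr (le_inv_inv hA hdA)
    obtain ⟨C, hC, hdC⟩ := hmult _ A (spanSingleton_ne_zero_iff.mpr hd) hA hd_le
    rw [s.star_spanSingleton hd] at hdC
    refine le_antisymm (s.star_le_one (mul_ne_zero hAv hAi) (inv_inv_mul_inv_le_one A)) ?_
    simpa only [inv_inv_inv hA] using s.one_le_star_mul_inv_of_spanSingleton_eq hd hAv hC hdC
end

section
/- An integral domain D is a ∗-Prüfer domain if and only if for all ∗-invertible nonzero fractional ideals A and B, the sum A + B is ∗-invertible. -/
open FractionalIdeal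

variable {D K : Type*} [CommRing D] [IsDomain D] [Field K] [Algebra D K] [IsFractionRing D K]

/-!
If `A` and `B` are `∗`-invertible, take `a ∈ A`, `b ∈ B` and `F = (a, b)`. Every `c = y + z ∈ A + B`
gives `a b A⁻¹ B⁻¹ F⁻¹ c ⊆ (a F⁻¹)(A⁻¹ y)(b B⁻¹) + (b F⁻¹)(B⁻¹ z)(a A⁻¹) ⊆ D`, so
`a b A⁻¹ B⁻¹ (F F⁻¹) ⊆ (A + B)(A + B)⁻¹`; as the finitely generated `F` is `∗`-invertible,
`a b A⁻¹ B⁻¹ ⊆ ((A + B)(A + B)⁻¹)^∗`. Summing over `a` and `b`,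
`D = ((A A⁻¹)(B B⁻¹))^∗ ⊆ ((A + B)(A + B)⁻¹)^∗`. Conversely, principal ideals are invertible,
so induction on the number of generators shows that finitely generated ideals are `∗`-invertible.
-/

open scoped nonZeroDivisors

instance FractionalIdeal.noZeroDivisors {R P : Type*} [CommRing R] {S : Submonoid R} [CommRing P]
    [Algebra R P] [NoZeroDivisors P] : NoZeroDivisors (FractionalIdeal S P) :=
  Function.Injective.noZeroDivisors _ coeToSubmodule_injective coe_zero coe_mul

namespace FractionalIdeal

theorem mul_le_of_forall_spanSingleton_mul_le {R P : Type*} [CommRing R] {S : Submonoid R}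
    [CommRing P] [Algebra R P] [IsLocalization S P] {I J L : FractionalIdeal S P}
    (h : ∀ i ∈ I, spanSingleton S i * J ≤ L) : I * J ≤ L :=
  mul_le.mpr fun i hi _ hj => h i hi (mul_mem_mul (mem_spanSingleton_self S i) hj)

theorem mul_inv_le_one_of_le {I J : FractionalIdeal D⁰ K} (h : I ≤ J) : I * J⁻¹ ≤ 1 :=
  (mul_le_mul_left h _).trans mul_one_div_le_one

theorem mul_inv_ne_zero {I : FractionalIdeal D⁰ K} (hI : I ≠ 0) : I * I⁻¹ ≠ 0 :=
  (bot_lt_mul_inv hI).ne'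

theorem mul_mul_inv_mul_inv_mul_inv_add_le_inv_add {A B P Q : FractionalIdeal D⁰ K}
    (hPA : P ≤ A) (hQB : Q ≤ B) (hA : A ≠ 0) :
    P * Q * (A⁻¹ * B⁻¹) * (P + Q)⁻¹ ≤ (A + B)⁻¹ := by
  have hAB : A + B ≠ 0 := fun h => hA (eq_zero_of_add_right h)
  rw [inv_eq (I := A + B), le_div_iff_mul_le hAB, mul_add, ← sup_eq_add]
  refine sup_le ?_ ?_
  · calc P * Q * (A⁻¹ * B⁻¹) * (P + Q)⁻¹ * A
          = (P * (P + Q)⁻¹) * (A * A⁻¹) * (Q * B⁻¹) := by ring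
      _ ≤ 1 * 1 * 1 := by
        gcongr
        exacts [mul_inv_le_one_of_le le_self_add, mul_inv_le_one_of_le le_rfl,
          mul_inv_le_one_of_le hQB]
      _ = 1 := by simp
  · calc P * Q * (A⁻¹ * B⁻¹) * (P + Q)⁻¹ * B
          = (Q * (P + Q)⁻¹) * (B * B⁻¹) * (P * A⁻¹) := by ring
      _ ≤ 1 * 1 * 1 := by
        gcongr
        exacts [mul_inv_le_one_of_le le_add_self, mul_inv_le_one_of_le le_rfl,
          mul_inv_le_one_of_le hPA]
      _ = 1 := by simp

end FractionalIdeal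

namespace StarOp

variable (s : StarOp D K)

def IsInvertible (A : FractionalIdeal D⁰ K) : Prop :=
  s.star (A * A⁻¹) = 1

def IsPrufer : Prop :=
  ∀ F : FractionalIdeal D⁰ K, F ≠ 0 → (F : Submodule D K).FG → s.IsInvertible F

theorem mul_star_le_star_mul {A : FractionalIdeal D⁰ K} (hA : A ≠ 0) (B : FractionalIdeal D⁰ K) :
    B * s.star A ≤ s.star (B * A) :=
  mul_le_of_forall_spanSingleton_mul_le fun y hy => by
    rcases eq_or_ne y 0 with rfl | hy0
    · simp [spanSingleton_zero]
    rw [← s.star_smul y hy0 hA]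
    exact s.star_mono (mul_ne_zero (spanSingleton_ne_zero_iff.mpr hy0) hA)
      (mul_le_mul_left (spanSingleton_le_iff_mem.mpr hy) A)

theorem mul_star_le_star_of_mul_le {X Y Z : FractionalIdeal D⁰ K} (hY : Y ≠ 0) (h : X * Y ≤ Z) :
    X * s.star Y ≤ s.star Z := by
  rcases eq_or_ne X 0 with rfl | hX
  · simp
  exact (s.mul_star_le_star_mul hY X).trans (s.star_mono (mul_ne_zero hX hY) h)

theorem star_mul_star_le_star {X Y Z : FractionalIdeal D⁰ K} (hX : X ≠ 0) (hY : Y ≠ 0)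
    (hZ : Z ≠ 0) (h : X * Y ≤ s.star Z) : s.star X * s.star Y ≤ s.star Z := by
  have hYX : Y * s.star X ≤ s.star Z := by
    simpa only [s.star_idem hZ] using
      s.mul_star_le_star_of_mul_le hX (Z := s.star Z) (mul_comm X Y ▸ h)
  simpa only [s.star_idem hZ] using
    s.mul_star_le_star_of_mul_le hY (Z := s.star Z) (mul_comm Y _ ▸ hYX)

theorem isInvertible_of_one_le {C : FractionalIdeal D⁰ K} (hC : C ≠ 0)
    (h : 1 ≤ s.star (C * C⁻¹)) : s.IsInvertible C :=
  le_antisymm (s.star_one ▸ s.star_mono (mul_inv_ne_zero hC) (mul_inv_le_one_of_le le_rfl)) h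

theorem isInvertible_spanSingleton {x : K} (hx : x ≠ 0) :
    s.IsInvertible (spanSingleton D⁰ x) := by
  rw [IsInvertible, spanSingleton_mul_inv K hx, s.star_one]

theorem mul_mul_inv_mul_inv_le_star_of_isInvertible_add {A B P Q : FractionalIdeal D⁰ K}
    (hPA : P ≤ A) (hQB : Q ≤ B) (hA : A ≠ 0) (hPQ : P + Q ≠ 0) (hinv : s.IsInvertible (P + Q)) :
    P * Q * (A⁻¹ * B⁻¹) ≤ s.star ((A + B) * (A + B)⁻¹) := by
  have hle : P * Q * (A⁻¹ * B⁻¹) * ((P + Q) * (P + Q)⁻¹) ≤ (A + B) * (A + B)⁻¹ :=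
    calc _ = (P + Q) * (P * Q * (A⁻¹ * B⁻¹) * (P + Q)⁻¹) := by ring
      _ ≤ (A + B) * (A + B)⁻¹ := by
        gcongr
        exact mul_mul_inv_mul_inv_mul_inv_add_le_inv_add hPA hQB hA
  have := s.mul_star_le_star_of_mul_le (mul_inv_ne_zero hPQ) hle
  rwa [hinv, mul_one] at this

theorem mul_mul_mul_inv_mul_inv_le_star (hPrufer : s.IsPrufer) {A B : FractionalIdeal D⁰ K}
    (hA : A ≠ 0) :
    A * B * (A⁻¹ * B⁻¹) ≤ s.star ((A + B) * (A + B)⁻¹) := by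
  rw [mul_assoc]
  refine mul_le_of_forall_spanSingleton_mul_le fun a ha => ?_
  rw [mul_left_comm]
  refine mul_le_of_forall_spanSingleton_mul_le fun b hb => ?_
  rw [← mul_assoc, mul_comm (spanSingleton D⁰ b)]
  rcases eq_or_ne a 0 with rfl | ha0
  · simp [spanSingleton_zero]
  have hF : spanSingleton D⁰ a + spanSingleton D⁰ b ≠ 0 :=
    fun h => spanSingleton_ne_zero_iff.mpr ha0 (eq_zero_of_add_right h)
  have hFG : (↑(spanSingleton D⁰ a + spanSingleton D⁰ b) : Submodule D K).FG := by
    rw [coe_add, coe_spanSingleton, coe_spanSingleton]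
    exact (Submodule.fg_span_singleton a).sup (Submodule.fg_span_singleton b)
  exact s.mul_mul_inv_mul_inv_le_star_of_isInvertible_add (spanSingleton_le_iff_mem.mpr ha)
    (spanSingleton_le_iff_mem.mpr hb) hA hF (hPrufer _ hF hFG)

theorem isInvertible_add (hPrufer : s.IsPrufer) {A B : FractionalIdeal D⁰ K} (hA : A ≠ 0)
    (hB : B ≠ 0) (hAi : s.IsInvertible A) (hBi : s.IsInvertible B) : s.IsInvertible (A + B) := by
  have hAB : A + B ≠ 0 := fun h => hA (eq_zero_of_add_right h)
  refine s.isInvertible_of_one_le hAB ?_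
  calc (1 : FractionalIdeal D⁰ K) = s.star (A * A⁻¹) * s.star (B * B⁻¹) := by
        rw [hAi, hBi, one_mul]
    _ ≤ s.star ((A + B) * (A + B)⁻¹) :=
      s.star_mul_star_le_star (mul_inv_ne_zero hA) (mul_inv_ne_zero hB) (mul_inv_ne_zero hAB)
        (mul_mul_mul_comm A _ B _ ▸ s.mul_mul_mul_inv_mul_inv_le_star hPrufer hA)

theorem isPrufer_of_isInvertible_add
    (hsum : ∀ A B : FractionalIdeal D⁰ K, A ≠ 0 → B ≠ 0 → s.IsInvertible A → s.IsInvertible B →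
      s.IsInvertible (A + B)) :
    s.IsPrufer := by
  suffices ∀ N : Submodule D K, N.FG → ∀ F : FractionalIdeal D⁰ K, (F : Submodule D K) = N →
      F ≠ 0 → s.IsInvertible F from fun F hF hFG => this _ hFG F rfl hF
  intro N hN
  induction N, hN using Submodule.fg_induction with
  | singleton x =>
    intro F hFx hF
    obtain rfl : F = spanSingleton D⁰ x := coeToSubmodule_inj.mp (by rw [hFx, coe_spanSingleton])
    exact s.isInvertible_spanSingleton (spanSingleton_ne_zero_iff.mp hF)
  | sup N₁ N₂ _ _ ih₁ ih₂ =>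
    intro F hFN hF
    obtain ⟨F₁, rfl⟩ : ∃ F₁ : FractionalIdeal D⁰ K, (F₁ : Submodule D K) = N₁ :=
      ⟨⟨N₁, isFractional_of_le (J := F) (hFN ▸ le_sup_left)⟩, rfl⟩
    obtain ⟨F₂, rfl⟩ : ∃ F₂ : FractionalIdeal D⁰ K, (F₂ : Submodule D K) = N₂ :=
      ⟨⟨N₂, isFractional_of_le (J := F) (hFN ▸ le_sup_right)⟩, rfl⟩
    obtain rfl : F = F₁ + F₂ :=
      coeToSubmodule_inj.mp (by rw [hFN, coe_add, Submodule.add_eq_sup])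
    rcases eq_or_ne F₁ 0 with rfl | h₁
    · rw [zero_add] at hF ⊢
      exact ih₂ F₂ rfl hF
    rcases eq_or_ne F₂ 0 with rfl | h₂
    · rw [add_zero] at hF ⊢
      exact ih₁ F₁ rfl hF
    exact hsum F₁ F₂ h₁ h₂ (ih₁ F₁ rfl h₁) (ih₂ F₂ rfl h₂)

end StarOp

/-- `D` is a `∗`-Prüfer domain iff the sum of any two `∗`-invertible nonzero
fractional ideals is `∗`-invertible. -/
theorem starPrufer_iff_sum_invertible (s : StarOp D K) :
    (∀ F : FractionalIdeal (nonZeroDivisors D) K, F ≠ 0 → (F : Submodule D K).FG → s.star (F * F⁻¹) = 1) ↔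
    (∀ A B : FractionalIdeal (nonZeroDivisors D) K, A ≠ 0 → B ≠ 0 → s.star (A * A⁻¹) = 1 → s.star (B * B⁻¹) = 1 →
      s.star ((A + B) * (A + B)⁻¹) = 1) :=
  ⟨fun hPrufer _ _ hA hB => s.isInvertible_add hPrufer hA hB,
    s.isPrufer_of_isInvertible_add⟩
end
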